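/- The set of periodic points of G_{f_0} is dense in (X, d). -/

import Mathlib

/-!
A point whose strategy repeats a block of length `m` returns to itself after `2m` steps:
during each block every coordinate `j` of the state is negated once for each occurrence of
`j` in the block, so after two blocks it has been negated an even number of times.
Periodising the first `m` terms of an arbitrary strategy, and keeping its state, moves the
point by at most `10⁻ᵐ`.
-/

/-- The phase space `X = ⟦1,N⟧^ℕ × 𝔹^N`: pairs of a strategy (a sequence with values
in `{1,…,N}`) and a boolean state vector indexed by `{1,…,N}`. -/
def XX (N : ℕ) : Type := (ℕ → Set.Icc 1 N) × (Set.Icc 1 N → Bool)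

/-- The distance `d((S,E),(Š,Ě)) = Σ_{k=1}^{N} δ(E_k,Ě_k) + (9/N) Σ_{k=1}^{∞} |S^k-Š^k|/10^k`,
where the `k`-th term (`k ≥ 1`) of a strategy `S : ℕ → ⟦1,N⟧` is `S (k-1)`. -/
noncomputable def dX {N : ℕ} (p q : XX N) : ℝ :=
  (∑ k : Set.Icc 1 N, if p.2 k = q.2 k then (0 : ℝ) else 1) +
    (9 / N) * ∑' k : ℕ, |((p.1 k : ℕ) : ℝ) - ((q.1 k : ℕ) : ℝ)| / 10 ^ (k + 1)

/-- The map `G_{f₀}(S,E) = (σ(S), F_{f₀}(S⁰,E))`, where `σ` is the shift and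
`F_{f₀}(k,E)` negates exactly the coordinate `k` of `E` (vectorial boolean negation). -/
def G {N : ℕ} (p : XX N) : XX N :=
  (fun n => p.1 (n + 1), fun j => if j = p.1 0 then !(p.2 j) else p.2 j)


open Function

def flipParity {N : ℕ} (S : ℕ → Set.Icc 1 N) (j : Set.Icc 1 N) : ℕ → Bool
  | 0 => false
  | n + 1 => xor (flipParity S j n) (decide (j = S n))

lemma iterate_G {N : ℕ} (p : XX N) (n : ℕ) :
    G^[n] p = (fun k => p.1 (k + n), fun j => xor (p.2 j) (flipParity p.1 j n)) := by
  induction n with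
  | zero => simp [flipParity]; rfl
  | succ n ih =>
    rw [iterate_succ_apply', ih]
    refine Prod.ext (funext fun k => ?_) (funext fun j => ?_)
    · simp only [G, add_right_comm, add_assoc]
    · simp only [G, zero_add, flipParity]
      split_ifs <;> simp [*]

lemma iterate_G_of_periodic {N m : ℕ} {p : XX N} (hp : Periodic p.1 m) :
    G^[m] p = (p.1, fun j => xor (p.2 j) (flipParity p.1 j m)) := by
  rw [iterate_G]
  exact Prod.ext (funext hp) rfl

lemma isPeriodicPt_G {N m : ℕ} {p : XX N} (hp : Periodic p.1 m) : IsPeriodicPt G (2 * m) p := by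
  have hm := iterate_G_of_periodic hp
  have hp' : Periodic (G^[m] p).1 m := by rw [hm]; exact hp
  change G^[2 * m] p = p
  rw [two_mul, iterate_add_apply, iterate_G_of_periodic hp', hm]
  simp only [Bool.xor_assoc, Bool.xor_self, Bool.xor_false]
  rfl

lemma tsum_div_ten_pow_le {f : ℕ → ℝ} {C : ℝ} {m : ℕ} (hf0 : ∀ k < m, f k = 0)
    (hf : ∀ k, 0 ≤ f k) (hC : ∀ k, f k ≤ C) :
    ∑' k, f k / 10 ^ (k + 1) ≤ C / 9 * (1 / 10) ^ m := by
  have hC0 : 0 ≤ C := (hf 0).trans (hC 0)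
  have hgeom : HasSum (fun k : ℕ => C / 10 ^ (m + 1) * (1 / 10) ^ k)
      (C / 10 ^ (m + 1) * (1 - 1 / 10)⁻¹) :=
    (hasSum_geometric_of_lt_one (by norm_num) (by norm_num)).mul_left _
  have hshift : ∀ k, f (k + m) / 10 ^ (k + m + 1) ≤ C / 10 ^ (m + 1) * (1 / 10) ^ k := by
    intro k
    rw [show f (k + m) / 10 ^ (k + m + 1) = f (k + m) / 10 ^ (m + 1) * (1 / 10) ^ k by
      rw [one_div_pow, pow_add]; field_simp; ring_nf]
    gcongr
    exact hC _
  have hsum : Summable fun k => f k / 10 ^ (k + 1) := by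
    refine (summable_nat_add_iff m).mp (Summable.of_nonneg_of_le (fun k => ?_) hshift
      hgeom.summable)
    exact div_nonneg (hf _) (by positivity)
  calc ∑' k, f k / 10 ^ (k + 1) = ∑' k, f (k + m) / 10 ^ (k + m + 1) := by
        rw [← hsum.sum_add_tsum_nat_add m, Finset.sum_eq_zero fun k hk => by
          rw [hf0 k (Finset.mem_range.mp hk), zero_div], zero_add]
    _ ≤ C / 10 ^ (m + 1) * (1 - 1 / 10)⁻¹ :=
        Summable.tsum_le_of_sum_le ((summable_nat_add_iff m).mpr hsum) fun s =>
          (Finset.sum_le_sum fun k _ => hshift k).trans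
            (sum_le_hasSum s (fun _ _ => by positivity) hgeom)
    _ = C / 9 * (1 / 10) ^ m := by rw [one_div_pow]; field_simp; ring

lemma dX_le_of_eqOn {N m : ℕ} {p q : XX N} (hE : p.2 = q.2) (hS : ∀ k < m, p.1 k = q.1 k) :
    dX p q ≤ (1 / 10) ^ m := by
  have hN : (0 : ℝ) < N := Nat.cast_pos.mpr ((p.1 0).2.1.trans (p.1 0).2.2)
  have hdiff : ∀ k, |((p.1 k : ℕ) : ℝ) - ((q.1 k : ℕ) : ℝ)| ≤ N := fun k =>
    abs_sub_le_of_nonneg_of_le (Nat.cast_nonneg _) (by exact_mod_cast (p.1 k).2.2)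
      (Nat.cast_nonneg _) (by exact_mod_cast (q.1 k).2.2)
  have htail := tsum_div_ten_pow_le (m := m) (fun k hk => by simp [hS k hk])
    (fun _ => abs_nonneg _) hdiff
  calc dX p q = 9 / N * ∑' k, |((p.1 k : ℕ) : ℝ) - ((q.1 k : ℕ) : ℝ)| / 10 ^ (k + 1) := by
        simp [dX, hE]
    _ ≤ 9 / N * (N / 9 * (1 / 10) ^ m) := by gcongr
    _ = (1 / 10) ^ m := by field_simp

theorem periodic_points_dense_general (N : ℕ) :
    ∀ p : XX N, ∀ ε > (0 : ℝ), ∃ q : XX N, dX p q < ε ∧ ∃ n > 0, G^[n] q = q := by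
  rintro ⟨S, E⟩ ε hε
  obtain ⟨m, hm⟩ := exists_pow_lt_of_lt_one hε (by norm_num : (1 / 10 : ℝ) < 1)
  let q : XX N := (fun k => S (k % (m + 1)), E)
  have hq : Periodic q.1 (m + 1) := fun k => by simp only [q, Nat.add_mod_right]
  refine ⟨q, ?_, 2 * (m + 1), by omega, isPeriodicPt_G hq⟩
  refine (dX_le_of_eqOn (p := (S, E)) (q := q) rfl fun k hk => ?_).trans_lt hm
  exact congrArg S (Nat.mod_eq_of_lt (hk.trans m.lt_succ_self)).symm

/-- The set of periodic points of `G_{f₀}` is dense in `(X, d)`. -/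
theorem periodic_points_dense (N : ℕ) (hN : 1 ≤ N) :
    ∀ p : XX N, ∀ ε > (0 : ℝ), ∃ q : XX N, dX p q < ε ∧ ∃ n > 0, G^[n] q = q :=
  periodic_points_dense_general N
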